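/- The averaged Borda count never exhibits a Condorcet loser failure: in any election with possibly partial ballots on n candidates, if candidate A loses every pairwise majority comparison (where a ranked candidate is counted as preferred to every unranked candidate, and ballots leaving both candidates unranked are ignored), then A does not have the strictly largest ABC score. -/

import Mathlib

/- A (possibly partial) ballot on `n` candidates is a duplicate-free nonempty list of
the ranked candidates in order of preference (head = first choice).  The averaged
Borda count (ABC) awards points (n, n-1, ..., n-k+1) to the k ranked candidates and
(n-k+1)/2 to each unranked candidate. -/

/-- ABC score of candidate `c` (rational-valued). -/
def abcScore (n : ℕ) (ballots : Multiset (List (Fin n))) (c : Fin n) : ℚ :=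
  (ballots.map (fun l =>
    if c ∈ l then (n : ℚ) - l.idxOf c else ((n : ℚ) - l.length + 1) / 2)).sum

/-- On a ballot `l`, candidate `x` is preferred to `y` if `x` is ranked above `y`,
or `x` is ranked and `y` is unranked. -/
def Prefers {n : ℕ} (l : List (Fin n)) (x y : Fin n) : Prop :=
  (x ∈ l ∧ y ∈ l ∧ l.idxOf x < l.idxOf y) ∨ (x ∈ l ∧ y ∉ l)

instance {n : ℕ} (l : List (Fin n)) (x y : Fin n) : Decidable (Prefers l x y) := by
  unfold Prefers; infer_instance

/- Split the ABC points of a ballot into pairwise contests: the ballot gives `c` one point, plus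
one for each candidate it prefers `c` to and one half for each other candidate that it leaves
unranked together with `c` (this is where `(n - k + 1) / 2` comes from). Summing over ballots,
`abcScore c = #ballots + ∑_{y ≠ c} T c y` with pairwise tallies `T x y + T y x = #ballots`.
A Condorcet loser `A` has `T A y < #ballots / 2` for every `y ≠ A`, so its score is below the
average score and some candidate scores more. -/

open Finset

section Tournament

variable {α : Type*} [Fintype α] [DecidableEq α]

theorem sum_sum_erase_comm {M : Type*} [AddCommMonoid M] (F : α → α → M) :
    ∑ x, ∑ y ∈ univ.erase x, F x y = ∑ x, ∑ y ∈ univ.erase x, F y x :=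
  sum_comm' fun x y => by simp [ne_comm]

variable {R : Type*} [CommRing R] {F : α → α → R} {m : R}

theorem two_mul_sum_sum_erase (hF : ∀ x y, x ≠ y → F x y + F y x = m) :
    2 * ∑ x, ∑ y ∈ univ.erase x, F x y = Fintype.card α * (Fintype.card α - 1) * m := by
  have hrow : ∀ x : α, ∑ y ∈ univ.erase x, (F x y + F y x) = (Fintype.card α - 1) * m := by
    intro x
    rw [sum_congr rfl fun y hy => hF x y (ne_of_mem_erase hy).symm, sum_const, nsmul_eq_mul,
      cast_card_erase_of_mem (mem_univ x), card_univ]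
  calc 2 * ∑ x, ∑ y ∈ univ.erase x, F x y
      = ∑ x, ∑ y ∈ univ.erase x, (F x y + F y x) := by
        simp only [sum_add_distrib, ← sum_sum_erase_comm F]; ring
    _ = Fintype.card α * (Fintype.card α - 1) * m := by
        rw [sum_congr rfl fun x _ => hrow x, sum_const, card_univ, nsmul_eq_mul, mul_assoc]

theorem exists_sum_erase_lt_of_lt_swap [LinearOrder R] [IsStrictOrderedRing R] [Nontrivial α]
    (hF : ∀ x y, x ≠ y → F x y + F y x = m) {a : α} (ha : ∀ b, b ≠ a → F a b < F b a) :
    ∃ b, ∑ y ∈ univ.erase a, F a y < ∑ y ∈ univ.erase b, F b y := by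
  have hrow : ∑ y ∈ univ.erase a, 2 * F a y < ∑ _y ∈ univ.erase a, m :=
    sum_lt_sum_of_nonempty univ_nontrivial.erase_nonempty fun b hb => by
      linarith [hF a b (ne_of_mem_erase hb).symm, ha b (ne_of_mem_erase hb)]
  rw [← mul_sum, sum_const, nsmul_eq_mul, cast_card_erase_of_mem (mem_univ a), card_univ] at hrow
  have hN : (0 : R) < Fintype.card α := by exact_mod_cast Fintype.card_pos
  have htotal :
      ∑ _x : α, ∑ y ∈ univ.erase a, F a y < ∑ x, ∑ y ∈ univ.erase x, F x y := by
    rw [sum_const, card_univ, nsmul_eq_mul]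
    nlinarith [two_mul_sum_sum_erase hF]
  obtain ⟨b, -, hb⟩ := exists_lt_of_sum_lt htotal
  exact ⟨b, hb⟩

end Tournament

section Ballot

variable {n : ℕ}

lemma not_prefers_self (l : List (Fin n)) (x : Fin n) : ¬ Prefers l x x := by
  simp [Prefers]

lemma card_unranked_add_length {l : List (Fin n)} (hl : l.Nodup) :
    #{y | y ∉ l} + l.length = n := by
  have hranked : ({y | y ∈ l} : Finset (Fin n)) = l.toFinset := by ext; simp
  rw [← List.toFinset_card_of_nodup hl, ← hranked, add_comm,
    card_filter_add_card_filter_not, card_univ, Fintype.card_fin]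

lemma card_prefers_add_idxOf {l : List (Fin n)} (hl : l.Nodup) {c : Fin n} (hc : c ∈ l) :
    #{y | Prefers l c y} + (l.idxOf c + 1) = n := by
  have hnot : ({y | ¬ Prefers l c y} : Finset (Fin n)) = (l.take (l.idxOf c + 1)).toFinset := by
    ext y
    by_cases hy : y ∈ l
    · simp [Prefers, hc, hy, List.mem_take_iff_idxOf_lt hy]
    · simp [Prefers, hc, hy, mt List.mem_of_mem_take hy]
  have hlen : (l.take (l.idxOf c + 1)).length = l.idxOf c + 1 := by
    simp [List.idxOf_lt_length_iff.2 hc]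
  rw [← hlen, ← List.toFinset_card_of_nodup (hl.sublist (List.take_sublist _ _)), ← hnot,
    card_filter_add_card_filter_not, card_univ, Fintype.card_fin]

def pairScore (l : List (Fin n)) (x y : Fin n) : ℚ :=
  if Prefers l x y then 1 else if x ∉ l ∧ y ∉ l then 1 / 2 else 0

lemma pairScore_add_pairScore_swap (l : List (Fin n)) {x y : Fin n} (hxy : x ≠ y) :
    pairScore l x y + pairScore l y x = 1 := by
  by_cases hx : x ∈ l <;> by_cases hy : y ∈ l
  · have hne : l.idxOf x ≠ l.idxOf y := mt (List.idxOf_inj hx).1 hxy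
    rcases Nat.lt_or_gt_of_ne hne with h | h <;> simp [pairScore, Prefers, hx, hy, h, h.le]
  all_goals norm_num [pairScore, Prefers, hx, hy]

def abcPoints (n : ℕ) (l : List (Fin n)) (c : Fin n) : ℚ :=
  if c ∈ l then (n : ℚ) - l.idxOf c else ((n : ℚ) - l.length + 1) / 2

lemma abcPoints_eq_one_add_sum_pairScore {l : List (Fin n)} (hl : l.Nodup) (c : Fin n) :
    abcPoints n l c = 1 + ∑ y ∈ univ.erase c, pairScore l c y := by
  by_cases hc : c ∈ l
  · have hscore : ∀ y, pairScore l c y = if Prefers l c y then 1 else 0 := by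
      simp [pairScore, hc]
    have hcount : (#{y | Prefers l c y} : ℚ) + (l.idxOf c + 1) = n := by
      exact_mod_cast card_prefers_add_idxOf hl hc
    rw [abcPoints, if_pos hc, sum_congr rfl fun y _ => hscore y,
      sum_erase _ (by simp [not_prefers_self]), sum_boole]
    linarith
  · have hscore : ∀ y, pairScore l c y = if y ∉ l then 1 / 2 else 0 := by
      simp [pairScore, Prefers, hc]
    have hcount : (#{y | y ∉ l} : ℚ) + l.length = n := by
      exact_mod_cast card_unranked_add_length hl
    rw [abcPoints, if_neg hc, sum_congr rfl fun y _ => hscore y, sum_erase_eq_sub (mem_univ c),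
      sum_ite, sum_const_zero, sum_const, nsmul_eq_mul, if_pos hc]
    linarith

lemma Multiset.sum_map_boole {α R : Type*} [AddCommMonoidWithOne R] (s : Multiset α)
    (p : α → Prop) [DecidablePred p] :
    (s.map fun a => if p a then (1 : R) else 0).sum = (s.filter p).card := by
  induction s using Multiset.induction with
  | empty => simp
  | cons a s ih => by_cases h : p a <;> simp [h, ih, add_comm]

def pairTally (ballots : Multiset (List (Fin n))) (x y : Fin n) : ℚ :=
  (ballots.map fun l => pairScore l x y).sum

lemma pairTally_add_pairTally_swap (ballots : Multiset (List (Fin n))) {x y : Fin n}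
    (hxy : x ≠ y) : pairTally ballots x y + pairTally ballots y x = ballots.card := by
  rw [pairTally, pairTally, ← Multiset.sum_map_add,
    Multiset.map_congr rfl fun l _ => pairScore_add_pairScore_swap l hxy]
  simp

lemma pairTally_eq (ballots : Multiset (List (Fin n))) (x y : Fin n) :
    pairTally ballots x y = (ballots.filter fun l => Prefers l x y).card
      + 1 / 2 * (ballots.filter fun l => x ∉ l ∧ y ∉ l).card := by
  have hsplit : ∀ l : List (Fin n), pairScore l x y =
      (if Prefers l x y then 1 else 0) + 1 / 2 * if x ∉ l ∧ y ∉ l then 1 else 0 := by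
    intro l
    by_cases h : Prefers l x y
    · have hx : x ∈ l := by rcases h with ⟨hx, -⟩ | ⟨hx, -⟩ <;> exact hx
      simp [pairScore, h, hx]
    · simp [pairScore, h]
  rw [pairTally, Multiset.map_congr rfl fun l _ => hsplit l, Multiset.sum_map_add,
    Multiset.sum_map_mul_left, Multiset.sum_map_boole, Multiset.sum_map_boole]

lemma pairTally_lt_swap_of_card_lt (ballots : Multiset (List (Fin n))) {x y : Fin n}
    (h : (ballots.filter fun l => Prefers l x y).card <
      (ballots.filter fun l => Prefers l y x).card) :
    pairTally ballots x y < pairTally ballots y x := by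
  have hties :
      (ballots.filter fun l => y ∉ l ∧ x ∉ l) = ballots.filter fun l => x ∉ l ∧ y ∉ l :=
    Multiset.filter_congr fun _ _ => and_comm
  rw [pairTally_eq, pairTally_eq, hties]
  gcongr

end Ballot

lemma abcScore_eq_card_add_sum_pairTally {ballots : Multiset (List (Fin n))}
    (hnodup : ∀ l ∈ ballots, l.Nodup) (c : Fin n) :
    abcScore n ballots c = ballots.card + ∑ y ∈ univ.erase c, pairTally ballots c y := by
  change (ballots.map fun l => abcPoints n l c).sum = _
  rw [Multiset.map_congr rfl fun l hl => abcPoints_eq_one_add_sum_pairScore (hnodup l hl) c,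
    Multiset.sum_map_add, Multiset.sum_map_sum]
  simp [pairTally]

/-- **ABC never exhibits a Condorcet loser failure**: if `A` loses every pairwise
majority comparison (ballots ranking neither candidate are ignored), then `A` does
not have the strictly largest ABC score. -/
theorem abc_no_condorcet_loser (n : ℕ) (hn : 2 ≤ n)
    (ballots : Multiset (List (Fin n)))
    (hvalid : ∀ l ∈ ballots, l ≠ [] ∧ l.Nodup)
    (A : Fin n)
    (hCL : ∀ B : Fin n, B ≠ A →
      (ballots.filter (fun l => Prefers l B A)).card >
      (ballots.filter (fun l => Prefers l A B)).card) :
    ¬ (∀ B : Fin n, B ≠ A → abcScore n ballots B < abcScore n ballots A) := by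
  intro hwins
  have : Nontrivial (Fin n) := Fin.nontrivial_iff_two_le.2 hn
  obtain ⟨B, hB⟩ := exists_sum_erase_lt_of_lt_swap
    (fun _ _ => pairTally_add_pairTally_swap ballots)
    fun B hB => pairTally_lt_swap_of_card_lt ballots (hCL B hB)
  have hBA : B ≠ A := by rintro rfl; exact lt_irrefl _ hB
  have hscore := abcScore_eq_card_add_sum_pairTally fun l hl => (hvalid l hl).2
  linarith [hwins B hBA, hscore A, hscore B]
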